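/- Let f:D→ℝ be strongly tree-submodular and K = max_i |D_i|. If x^0, x^1, …, x^m is a sequence in D such that f(x^0) = min{ f(y) : y ∈ INWARD(x^0) } and for each t, x^{t+1} is a minimizer of f over OUTWARD(x^t) with f(x^{t+1}) < f(x^t), then m ≤ K. (The outward steepest-descent phase performs at most K cost-decreasing steps.) -/
import Mathlib


/-- A finite rooted tree on vertex set `V`, encoded by its root, the parent function
(with `parent root = root`) and the depth function (distance to the root). -/
structure RTree (V : Type*) where
  root : V
  parent : V → V
  depth : V → ℕ
  parent_root : parent root = root
  depth_root : depth root = 0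
  depth_parent : ∀ v, v ≠ root → depth (parent v) + 1 = depth v

namespace RTree

variable {V : Type*} (T : RTree V)

/-- `a ⪯ b` : `a` is an ancestor of `b`, i.e. `a` lies on the path from `b` to the root. -/
def anc (a b : V) : Prop := ∃ k : ℕ, T.parent^[k] b = a

theorem iterate_depth_aux : ∀ (n : ℕ) (v : V), T.depth v = n → T.parent^[n] v = T.root := by
  intro n
  induction n with
  | zero =>
    intro v hn
    by_cases hv : v = T.root
    · simp [hv]
    · have := T.depth_parent v hv; omega
  | succ n ih =>
    intro v hn
    have hv : v ≠ T.root := by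
      intro h; rw [h, T.depth_root] at hn; omega
    have h := T.depth_parent v hv
    rw [Function.iterate_succ_apply]
    exact ih (T.parent v) (by omega)

theorem iterate_depth (v : V) : T.parent^[T.depth v] v = T.root :=
  T.iterate_depth_aux (T.depth v) v rfl

theorem anc_root (b : V) : T.anc T.root b := ⟨T.depth b, T.iterate_depth b⟩

theorem exists_lcaIndex (a b : V) : ∃ k : ℕ, T.anc (T.parent^[k] a) b :=
  ⟨T.depth a, by rw [T.iterate_depth a]; exact T.anc_root b⟩

open Classical in
/-- The highest common ancestor of `a` and `b` : the deepest vertex that is an ancestor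
of both `a` and `b` (i.e. the unique vertex of the path `P[a→b]` that is an ancestor of both). -/
noncomputable def lca (a b : V) : V := T.parent^[Nat.find (T.exists_lcaIndex a b)] a

/-- `ρ(a,b)` : the number of edges of the unique path `P[a→b]` from `a` to `b`. -/
noncomputable def dist (a b : V) : ℕ :=
  (T.depth a - T.depth (T.lca a b)) + (T.depth b - T.depth (T.lca a b))

open Classical in
/-- `P[a→b, d]` : the `d`-th vertex of the path from `a` to `b` (first the ascending part
from `a` to the highest common ancestor, then the descending part towards `b`);
by convention it equals `b` for `d > ρ(a,b)`. -/
noncomputable def pathVertex (a b : V) (d : ℕ) : V :=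
  if T.dist a b ≤ d then b
  else if d ≤ T.depth a - T.depth (T.lca a b) then T.parent^[d] a
  else T.parent^[T.dist a b - d] b

open Classical in
/-- `a ⊓ b` : the member of `{P[a→b,⌊ρ(a,b)/2⌋], P[a→b,⌈ρ(a,b)/2⌉]}` that is an
ancestor of the other one. -/
noncomputable def cap (a b : V) : V :=
  if T.anc (T.pathVertex a b (T.dist a b / 2)) (T.pathVertex a b ((T.dist a b + 1) / 2))
  then T.pathVertex a b (T.dist a b / 2)
  else T.pathVertex a b ((T.dist a b + 1) / 2)

open Classical in
/-- `a ⊔ b` : the member of `{P[a→b,⌊ρ(a,b)/2⌋], P[a→b,⌈ρ(a,b)/2⌉]}` that is a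
descendant of the other one. -/
noncomputable def cup (a b : V) : V :=
  if T.anc (T.pathVertex a b (T.dist a b / 2)) (T.pathVertex a b ((T.dist a b + 1) / 2))
  then T.pathVertex a b ((T.dist a b + 1) / 2)
  else T.pathVertex a b (T.dist a b / 2)

/-- `a ∧ b` : the highest common ancestor of `a` and `b`. -/
noncomputable def meet (a b : V) : V := T.lca a b

/-- `a ∨ b` : the unique vertex of `P[a→b]` with `ρ(a, a∨b) = ρ(a∧b, b)`. -/
noncomputable def join (a b : V) : V :=
  T.pathVertex a b (T.depth b - T.depth (T.lca a b))

/-- `a ↑^d b = P[a→b,d] ∧ b`. -/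
noncomputable def up (d : ℕ) (a b : V) : V := T.meet (T.pathVertex a b d) b

/-- `a ↓_d b = P[a→b, ρ(a ↑^d b, b)]`. -/
noncomputable def down (d : ℕ) (a b : V) : V :=
  T.pathVertex a b (T.dist (T.up d a b) b)

end RTree

section Product

variable {ι : Type*} {V : ι → Type*}

/-- `f` is strongly tree-submodular w.r.t. the trees `T i`:
`f(x) + f(y) ≥ f(x ⊓ y) + f(x ⊔ y)`, the operations acting componentwise. -/
def StronglyTreeSubmodular (T : ∀ i, RTree (V i)) (f : (∀ i, V i) → ℝ) : Prop :=
  ∀ x y : ∀ i, V i,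
    f (fun i => (T i).cap (x i) (y i)) + f (fun i => (T i).cup (x i) (y i)) ≤ f x + f y

/-- `INWARD(x) = { y ∈ NEIB(x) : y ⪯ x }`, where `NEIB(x) = {y : max_i ρ(x_i,y_i) ≤ 1}`. -/
def inward (T : ∀ i, RTree (V i)) (x : ∀ i, V i) : Set (∀ i, V i) :=
  {y | (∀ i, (T i).dist (x i) (y i) ≤ 1) ∧ ∀ i, (T i).anc (y i) (x i)}

/-- `OUTWARD(x) = { y ∈ NEIB(x) : x ⪯ y }`. -/
def outward (T : ∀ i, RTree (V i)) (x : ∀ i, V i) : Set (∀ i, V i) :=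
  {y | (∀ i, (T i).dist (x i) (y i) ≤ 1) ∧ ∀ i, (T i).anc (x i) (y i)}

end Product


/-! ### Auxiliary lemmas -/

namespace RTree

variable {V : Type*} (T : RTree V)

theorem parent_iterate_root (k : ℕ) : T.parent^[k] T.root = T.root := by
  induction k with
  | zero => rfl
  | succ k ih => rw [Function.iterate_succ_apply', ih, T.parent_root]

theorem depth_iterate {k : ℕ} {v : V} (h : k ≤ T.depth v) :
    T.depth (T.parent^[k] v) = T.depth v - k := by
  induction k generalizing v with
  | zero => simp
  | succ k ih =>
    have hv : v ≠ T.root := by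
      intro hh; rw [hh, T.depth_root] at h; omega
    have hp := T.depth_parent v hv
    rw [Function.iterate_succ_apply, ih (by omega)]
    omega

theorem iterate_eq_root {k : ℕ} {v : V} (h : T.depth v ≤ k) : T.parent^[k] v = T.root := by
  obtain ⟨j, hj⟩ := Nat.exists_eq_add_of_le h
  rw [hj, add_comm, Function.iterate_add_apply, T.iterate_depth, T.parent_iterate_root]

theorem depth_iterate_le (k : ℕ) (v : V) : T.depth (T.parent^[k] v) ≤ T.depth v := by
  rcases le_total k (T.depth v) with h | h
  · rw [T.depth_iterate h]; omega
  · rw [T.iterate_eq_root h, T.depth_root]; omega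

theorem anc_refl (a : V) : T.anc a a := ⟨0, rfl⟩

theorem anc_trans {a b c : V} (h1 : T.anc a b) (h2 : T.anc b c) : T.anc a c := by
  obtain ⟨k, hk⟩ := h1; obtain ⟨j, hj⟩ := h2
  exact ⟨k + j, by rw [Function.iterate_add_apply, hj, hk]⟩

theorem depth_le_of_anc {a b : V} (h : T.anc a b) : T.depth a ≤ T.depth b := by
  obtain ⟨k, hk⟩ := h
  rw [← hk]; exact T.depth_iterate_le k b

theorem anc_iterate {a b : V} (h : T.anc a b) :
    T.parent^[T.depth b - T.depth a] b = a := by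
  obtain ⟨k, hk⟩ := h
  rcases le_or_gt k (T.depth b) with hle | hlt
  · have hd : T.depth a = T.depth b - k := by rw [← hk, T.depth_iterate hle]
    rw [show T.depth b - T.depth a = k by omega, hk]
  · have ha : a = T.root := by rw [← hk]; exact T.iterate_eq_root (by omega)
    subst ha
    rw [T.depth_root, Nat.sub_zero]
    exact T.iterate_depth b

theorem eq_of_anc_depth_le {a b : V} (h : T.anc a b) (hd : T.depth b ≤ T.depth a) :
    a = b := by
  have e1 := T.anc_iterate h
  rw [show T.depth b - T.depth a = 0 by omega] at e1
  exact e1.symm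

theorem anc_antisymm {a b : V} (h1 : T.anc a b) (h2 : T.anc b a) : a = b :=
  T.eq_of_anc_depth_le h1 (T.depth_le_of_anc h2)

theorem anc_of_anc_anc {a b c : V} (h1 : T.anc a c) (h2 : T.anc b c)
    (hd : T.depth a ≤ T.depth b) : T.anc a b := by
  refine ⟨T.depth b - T.depth a, ?_⟩
  have e1 := T.anc_iterate h1
  have e2 := T.anc_iterate h2
  have d2 := T.depth_le_of_anc h2
  have e3 : T.parent^[T.depth b - T.depth a] b
      = T.parent^[T.depth b - T.depth a] (T.parent^[T.depth c - T.depth b] c) := by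
    rw [e2]
  rw [e3, ← Function.iterate_add_apply,
    show T.depth b - T.depth a + (T.depth c - T.depth b) = T.depth c - T.depth a by omega]
  exact e1

theorem anc_iterate_of_le {x v : V} (h : T.anc x v) {k : ℕ}
    (hk : k ≤ T.depth v - T.depth x) : T.anc x (T.parent^[k] v) := by
  refine ⟨T.depth v - T.depth x - k, ?_⟩
  rw [← Function.iterate_add_apply,
    show T.depth v - T.depth x - k + k = T.depth v - T.depth x by omega]
  exact T.anc_iterate h

open Classical in
theorem anc_lca_left (a b : V) : T.anc (T.lca a b) a :=
  ⟨Nat.find (T.exists_lcaIndex a b), rfl⟩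

open Classical in
theorem anc_lca_right (a b : V) : T.anc (T.lca a b) b :=
  Nat.find_spec (T.exists_lcaIndex a b)

open Classical in
theorem anc_lca_of_anc {a b c : V} (h1 : T.anc c a) (h2 : T.anc c b) :
    T.anc c (T.lca a b) := by
  have e1 := T.anc_iterate h1
  have hmin : Nat.find (T.exists_lcaIndex a b) ≤ T.depth a - T.depth c :=
    Nat.find_min' _ (by rw [e1]; exact h2)
  refine ⟨T.depth a - T.depth c - Nat.find (T.exists_lcaIndex a b), ?_⟩
  have hl : T.lca a b = T.parent^[Nat.find (T.exists_lcaIndex a b)] a := rfl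
  rw [hl, ← Function.iterate_add_apply,
    show T.depth a - T.depth c - Nat.find (T.exists_lcaIndex a b) +
      Nat.find (T.exists_lcaIndex a b) = T.depth a - T.depth c by omega]
  exact e1

theorem lca_eq_left {a b : V} (h : T.anc a b) : T.lca a b = a :=
  T.anc_antisymm (T.anc_lca_left a b) (T.anc_lca_of_anc (T.anc_refl a) h)

theorem lca_eq_right {a b : V} (h : T.anc b a) : T.lca a b = b :=
  T.anc_antisymm (T.anc_lca_right a b) (T.anc_lca_of_anc h (T.anc_refl b))

theorem lca_comm (a b : V) : T.lca a b = T.lca b a :=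
  T.anc_antisymm
    (T.anc_lca_of_anc (T.anc_lca_right a b) (T.anc_lca_left a b))
    (T.anc_lca_of_anc (T.anc_lca_right b a) (T.anc_lca_left b a))

theorem dist_def (a b : V) : T.dist a b =
    (T.depth a - T.depth (T.lca a b)) + (T.depth b - T.depth (T.lca a b)) := rfl

theorem dist_self (a : V) : T.dist a a = 0 := by
  rw [T.dist_def, T.lca_eq_left (T.anc_refl a)]; omega

theorem eq_of_dist_eq_zero {a b : V} (h : T.dist a b = 0) : a = b := by
  have h1 := T.anc_lca_left a b
  have h2 := T.anc_lca_right a b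
  have d1 := T.depth_le_of_anc h1
  have d2 := T.depth_le_of_anc h2
  rw [T.dist_def] at h
  have e1 := T.eq_of_anc_depth_le h1 (by omega)
  have e2 := T.eq_of_anc_depth_le h2 (by omega)
  exact e1.symm.trans e2

theorem dist_of_anc {a b : V} (h : T.anc a b) :
    T.dist a b = T.depth b - T.depth a := by
  rw [T.dist_def, T.lca_eq_left h]; omega

theorem dist_of_anc' {a b : V} (h : T.anc b a) :
    T.dist a b = T.depth a - T.depth b := by
  rw [T.dist_def, T.lca_eq_right h]; omega

theorem dist_comm (a b : V) : T.dist a b = T.dist b a := by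
  rw [T.dist_def, T.dist_def, T.lca_comm]; omega

theorem dist_triangle_of_anc {a b c : V} (hca : T.anc c a) (hcb : T.anc c b) :
    T.dist a b ≤ T.dist c a + T.dist c b := by
  have hl := T.anc_lca_of_anc hca hcb
  have d0 := T.depth_le_of_anc hl
  have d1 := T.depth_le_of_anc (T.anc_lca_left a b)
  have d2 := T.depth_le_of_anc (T.anc_lca_right a b)
  rw [T.dist_def, T.dist_of_anc hca, T.dist_of_anc hcb]
  omega

theorem anc_total_of_anc {a b c : V} (h1 : T.anc a c) (h2 : T.anc b c) :
    T.anc a b ∨ T.anc b a := by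
  rcases le_total (T.depth a) (T.depth b) with h | h
  · exact Or.inl (T.anc_of_anc_anc h1 h2 h)
  · exact Or.inr (T.anc_of_anc_anc h2 h1 h)

theorem dist_le_one_of {p q r : V} (h1 : T.anc p q) (h2 : T.anc r q)
    (hd1 : T.depth q ≤ T.depth p + 1) (hd2 : T.depth q ≤ T.depth r + 1) :
    T.dist p r ≤ 1 := by
  have dp := T.depth_le_of_anc h1
  have dr := T.depth_le_of_anc h2
  rcases T.anc_total_of_anc h1 h2 with h | h
  · rw [T.dist_of_anc h]; omega
  · rw [T.dist_of_anc' h]; omega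

theorem comparable_of_dist_le_one {a b : V} (h : T.dist a b ≤ 1) :
    T.anc a b ∨ T.anc b a := by
  have h1 := T.anc_lca_left a b
  have h2 := T.anc_lca_right a b
  have d1 := T.depth_le_of_anc h1
  have d2 := T.depth_le_of_anc h2
  rw [T.dist_def] at h
  rcases (by omega : T.depth (T.lca a b) = T.depth a ∨ T.depth (T.lca a b) = T.depth b)
    with hd | hd
  · left
    have : T.lca a b = a := T.eq_of_anc_depth_le h1 (by omega)
    rw [← this]; exact h2
  · right
    have : T.lca a b = b := T.eq_of_anc_depth_le h2 (by omega)
    rw [← this]; exact h1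

theorem pathVertex_cases {a b : V} {d : ℕ} (h : d ≤ T.dist a b) :
    (d ≤ T.depth a - T.depth (T.lca a b) ∧ T.pathVertex a b d = T.parent^[d] a) ∨
    (T.depth a - T.depth (T.lca a b) ≤ d ∧
      T.pathVertex a b d = T.parent^[T.dist a b - d] b) := by
  have hu := T.dist_def a b
  unfold pathVertex
  split_ifs with h1 h2
  · right
    refine ⟨by omega, ?_⟩
    rw [show T.dist a b - d = 0 by omega]
    rfl
  · exact Or.inl ⟨h2, rfl⟩
  · exact Or.inr ⟨by omega, rfl⟩

theorem pathVertex_zero (a b : V) : T.pathVertex a b 0 = a := by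
  unfold pathVertex
  split_ifs with h1 h2
  · exact (T.eq_of_dist_eq_zero (by omega)).symm
  · rfl
  · omega

theorem pathVertex_of_ge {a b : V} {d : ℕ} (h : T.dist a b ≤ d) :
    T.pathVertex a b d = b := by
  unfold pathVertex
  rw [if_pos h]

theorem anc_lca_pathVertex {a b : V} {d : ℕ} (h : d ≤ T.dist a b) :
    T.anc (T.lca a b) (T.pathVertex a b d) := by
  have hu := T.dist_def a b
  have d2 := T.depth_le_of_anc (T.anc_lca_right a b)
  rcases T.pathVertex_cases h with ⟨hd, he⟩ | ⟨hd, he⟩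
  · rw [he]; exact T.anc_iterate_of_le (T.anc_lca_left a b) hd
  · rw [he]; exact T.anc_iterate_of_le (T.anc_lca_right a b) (by omega)

theorem depth_pathVertex_le {a b : V} {d : ℕ} (h : d ≤ T.dist a b) :
    T.depth (T.pathVertex a b d) ≤ max (T.depth a) (T.depth b) := by
  rcases T.pathVertex_cases h with ⟨_, he⟩ | ⟨_, he⟩ <;> rw [he]
  · exact le_trans (T.depth_iterate_le _ _) (le_max_left _ _)
  · exact le_trans (T.depth_iterate_le _ _) (le_max_right _ _)

theorem dist_pathVertex {a b : V} {d : ℕ} (h : d ≤ T.dist a b) :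
    T.dist a (T.pathVertex a b d) = d := by
  have hu := T.dist_def a b
  have dla := T.depth_le_of_anc (T.anc_lca_left a b)
  have dlb := T.depth_le_of_anc (T.anc_lca_right a b)
  rcases T.pathVertex_cases h with ⟨hd, he⟩ | ⟨hd, he⟩
  · have hanc : T.anc (T.pathVertex a b d) a := ⟨d, he.symm⟩
    have hdp : T.depth (T.pathVertex a b d) = T.depth a - d := by
      rw [he, T.depth_iterate (by omega)]
    rw [T.dist_of_anc' hanc, hdp]
    omega
  · have hpb : T.anc (T.pathVertex a b d) b := ⟨T.dist a b - d, he.symm⟩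
    have hLp : T.anc (T.lca a b) (T.pathVertex a b d) := T.anc_lca_pathVertex h
    have h1 : T.anc (T.lca a (T.pathVertex a b d)) (T.lca a b) :=
      T.anc_lca_of_anc (T.anc_lca_left a _)
        (T.anc_trans (T.anc_lca_right a _) hpb)
    have h2 : T.anc (T.lca a b) (T.lca a (T.pathVertex a b d)) :=
      T.anc_lca_of_anc (T.anc_lca_left a b) hLp
    have hL : T.lca a (T.pathVertex a b d) = T.lca a b := T.anc_antisymm h1 h2
    have hdp : T.depth (T.pathVertex a b d) = T.depth b - (T.dist a b - d) := by
      rw [he, T.depth_iterate (by omega)]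
    have hdLp := T.depth_le_of_anc hLp
    rw [T.dist_def, hL]
    omega

theorem pathVertex_mid_comparable (a b : V) :
    T.anc (T.pathVertex a b (T.dist a b / 2)) (T.pathVertex a b ((T.dist a b + 1) / 2)) ∨
    T.anc (T.pathVertex a b ((T.dist a b + 1) / 2)) (T.pathVertex a b (T.dist a b / 2)) := by
  have hu := T.dist_def a b
  by_cases he : T.dist a b / 2 = (T.dist a b + 1) / 2
  · rw [he]; exact Or.inl (T.anc_refl _)
  · have hce : (T.dist a b + 1) / 2 = T.dist a b / 2 + 1 := by omega
    have hfl_le : T.dist a b / 2 ≤ T.dist a b := by omega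
    have hce_le : (T.dist a b + 1) / 2 ≤ T.dist a b := by omega
    have eL : T.parent^[T.depth a - T.depth (T.lca a b)] a = T.lca a b :=
      T.anc_iterate (T.anc_lca_left a b)
    have eR : T.parent^[T.depth b - T.depth (T.lca a b)] b = T.lca a b :=
      T.anc_iterate (T.anc_lca_right a b)
    rcases T.pathVertex_cases hfl_le with ⟨h1, e1⟩ | ⟨h1, e1⟩ <;>
      rcases T.pathVertex_cases hce_le with ⟨h2, e2⟩ | ⟨h2, e2⟩
    · refine Or.inr ⟨1, ?_⟩
      rw [e2, e1, ← Function.iterate_add_apply]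
      congr 1
      omega
    · rcases (by omega : T.depth a - T.depth (T.lca a b) = T.dist a b / 2 ∨
        T.depth a - T.depth (T.lca a b) = (T.dist a b + 1) / 2) with hh | hh
      · left
        have : T.pathVertex a b (T.dist a b / 2) = T.lca a b := by
          rw [e1, ← hh]; exact eL
        rw [this]
        exact T.anc_lca_pathVertex hce_le
      · right
        have : T.pathVertex a b ((T.dist a b + 1) / 2) = T.lca a b := by
          rw [e2, show T.dist a b - (T.dist a b + 1) / 2
            = T.depth b - T.depth (T.lca a b) by omega]
          exact eR
        rw [this]
        exact T.anc_lca_pathVertex hfl_le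
    · omega
    · refine Or.inl ⟨1, ?_⟩
      rw [e1, e2, ← Function.iterate_add_apply]
      congr 1
      omega

theorem capcup_cases (a b : V) :
    (T.cap a b = T.pathVertex a b (T.dist a b / 2) ∧
     T.cup a b = T.pathVertex a b ((T.dist a b + 1) / 2) ∧
     T.anc (T.pathVertex a b (T.dist a b / 2)) (T.pathVertex a b ((T.dist a b + 1) / 2))) ∨
    (T.cap a b = T.pathVertex a b ((T.dist a b + 1) / 2) ∧
     T.cup a b = T.pathVertex a b (T.dist a b / 2) ∧
     T.anc (T.pathVertex a b ((T.dist a b + 1) / 2)) (T.pathVertex a b (T.dist a b / 2))) := by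
  unfold cap cup
  split_ifs with h
  · exact Or.inl ⟨rfl, rfl, h⟩
  · rcases T.pathVertex_mid_comparable a b with h' | h'
    · exact absurd h' h
    · exact Or.inr ⟨rfl, rfl, h'⟩

theorem anc_cap_cup (a b : V) : T.anc (T.cap a b) (T.cup a b) := by
  rcases T.capcup_cases a b with ⟨e1, e2, h⟩ | ⟨e1, e2, h⟩ <;> rw [e1, e2] <;> exact h

theorem cap_cup_of_dist_le_one {a b : V} (h : T.dist a b ≤ 1) :
    (T.cap a b = a ∧ T.cup a b = b ∧ T.anc a b) ∨
    (T.cap a b = b ∧ T.cup a b = a ∧ T.anc b a) := by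
  by_cases h0 : T.dist a b = 0
  · have hab := T.eq_of_dist_eq_zero h0
    subst hab
    have hP : ∀ d, T.pathVertex a a d = a := fun d => T.pathVertex_of_ge (by omega)
    rcases T.capcup_cases a a with ⟨e1, e2, _⟩ | ⟨e1, e2, _⟩ <;>
      exact Or.inl ⟨by rw [e1, hP], by rw [e2, hP], T.anc_refl a⟩
  · have h1 : T.dist a b = 1 := by omega
    have hfl : T.dist a b / 2 = 0 := by omega
    have hce : (T.dist a b + 1) / 2 = 1 := by omega
    have hP0 : T.pathVertex a b (T.dist a b / 2) = a := by
      rw [hfl]; exact T.pathVertex_zero a b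
    have hP1 : T.pathVertex a b ((T.dist a b + 1) / 2) = b := by
      rw [hce]; exact T.pathVertex_of_ge (by omega)
    rcases T.capcup_cases a b with ⟨e1, e2, hg⟩ | ⟨e1, e2, hg⟩
    · rw [hP0] at e1 hg
      rw [hP1] at e2 hg
      exact Or.inl ⟨e1, e2, hg⟩
    · rw [hP1] at e1 hg
      rw [hP0] at e2 hg
      exact Or.inr ⟨e1, e2, hg⟩

theorem anc_capcup_of_anc {c a b : V} (hca : T.anc c a) (hcb : T.anc c b) :
    T.anc c (T.cap a b) ∧ T.anc c (T.cup a b) := by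
  have hL : T.anc c (T.lca a b) := T.anc_lca_of_anc hca hcb
  have p1 : T.anc (T.lca a b) (T.pathVertex a b (T.dist a b / 2)) :=
    T.anc_lca_pathVertex (by omega)
  have p2 : T.anc (T.lca a b) (T.pathVertex a b ((T.dist a b + 1) / 2)) :=
    T.anc_lca_pathVertex (by omega)
  rcases T.capcup_cases a b with ⟨e1, e2, _⟩ | ⟨e1, e2, _⟩ <;> rw [e1, e2]
  · exact ⟨T.anc_trans hL p1, T.anc_trans hL p2⟩
  · exact ⟨T.anc_trans hL p2, T.anc_trans hL p1⟩

theorem dist_cap_cup_le (a b : V) :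
    T.dist a (T.cap a b) ≤ (T.dist a b + 1) / 2 ∧
    T.dist a (T.cup a b) ≤ (T.dist a b + 1) / 2 := by
  have d1 : T.dist a (T.pathVertex a b (T.dist a b / 2)) = T.dist a b / 2 :=
    T.dist_pathVertex (by omega)
  have d2 : T.dist a (T.pathVertex a b ((T.dist a b + 1) / 2)) = (T.dist a b + 1) / 2 :=
    T.dist_pathVertex (by omega)
  rcases T.capcup_cases a b with ⟨e1, e2, _⟩ | ⟨e1, e2, _⟩ <;> rw [e1, e2]
  · rw [d1, d2]; omega
  · rw [d1, d2]; omega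

theorem dist_cup_le {c a b : V} (hca : T.anc c a) (hcb : T.anc c b) :
    T.dist c (T.cup a b) ≤ max (T.dist c a) (T.dist c b) := by
  have hcup := (T.anc_capcup_of_anc hca hcb).2
  have hd : T.depth (T.cup a b) ≤ max (T.depth a) (T.depth b) := by
    rcases T.capcup_cases a b with ⟨_, e2, _⟩ | ⟨_, e2, _⟩ <;> rw [e2] <;>
      exact T.depth_pathVertex_le (by omega)
  rw [T.dist_of_anc hcup, T.dist_of_anc hca, T.dist_of_anc hcb]
  rcases le_total (T.depth a) (T.depth b) with h | h
  · rw [Nat.max_eq_right h] at hd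
    rw [Nat.max_eq_right (by omega)]
    omega
  · rw [Nat.max_eq_left h] at hd
    rw [Nat.max_eq_left (by omega)]
    omega

theorem dist_cap_le {c a b : V} (hca : T.anc c a) (hcb : T.anc c b) {t : ℕ}
    (h2 : T.dist c a ≤ t) (h3 : T.dist c b ≤ t + 1) : T.dist c (T.cap a b) ≤ t := by
  have hcap := (T.anc_capcup_of_anc hca hcb).1
  have dca := T.depth_le_of_anc hca
  have dcb := T.depth_le_of_anc hcb
  rw [T.dist_of_anc hca] at h2
  rw [T.dist_of_anc hcb] at h3
  rw [T.dist_of_anc hcap]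
  by_cases hd : T.dist a b ≤ 1
  · rcases T.cap_cup_of_dist_le_one hd with ⟨e1, _, _⟩ | ⟨e1, _, hba⟩
    · rw [e1]; omega
    · rw [e1]
      have := T.depth_le_of_anc hba
      omega
  · -- dist a b ≥ 2
    have hu := T.dist_def a b
    have dla := T.depth_le_of_anc (T.anc_lca_left a b)
    have dlb := T.depth_le_of_anc (T.anc_lca_right a b)
    have hdP : T.depth (T.pathVertex a b (T.dist a b / 2)) + 1
        ≤ max (T.depth a) (T.depth b) := by
      rcases T.pathVertex_cases (a := a) (b := b) (d := T.dist a b / 2) (by omega)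
        with ⟨h1, e1⟩ | ⟨h1, e1⟩
      · rw [e1, T.depth_iterate (by omega)]
        have := le_max_left (T.depth a) (T.depth b)
        omega
      · rw [e1, T.depth_iterate (by omega)]
        have := le_max_right (T.depth a) (T.depth b)
        omega
    have hcap_le : T.depth (T.cap a b) ≤ T.depth (T.pathVertex a b (T.dist a b / 2)) := by
      rcases T.capcup_cases a b with ⟨e1, _, _⟩ | ⟨_, e2, _⟩
      · rw [e1]
      · have h := T.anc_cap_cup a b
        rw [e2] at h
        exact T.depth_le_of_anc h
    rcases max_choice (T.depth a) (T.depth b) with hm | hm <;> rw [hm] at hdP <;> omega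

theorem depth_lt_card [Fintype V] (v : V) : T.depth v < Fintype.card V := by
  have hinj : Function.Injective (fun j : Fin (T.depth v + 1) => T.parent^[j.1] v) := by
    intro j1 j2 h
    simp only at h
    have e1 : T.depth (T.parent^[j1.1] v) = T.depth v - j1.1 :=
      T.depth_iterate (by omega)
    have e2 : T.depth (T.parent^[j2.1] v) = T.depth v - j2.1 :=
      T.depth_iterate (by omega)
    rw [h, e2] at e1
    have hj1 := j1.isLt
    have hj2 := j2.isLt
    exact Fin.ext (by omega)
  have := Fintype.card_le_of_injective _ hinj
  simpa using this

end RTree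

/-- The outward steepest-descent phase performs at most
`K = max_i |D_i|` cost-decreasing steps: if `x⁰` minimizes `f` over `INWARD(x⁰)` and each
`x^{t+1}` is a minimizer of `f` over `OUTWARD(x^t)` with `f(x^{t+1}) < f(x^t)`, then
`m ≤ K`. -/
theorem outward_phase_at_most_K_steps {ι : Type*} [Fintype ι] {V : ι → Type*}
    [∀ i, Fintype (V i)] (T : ∀ i, RTree (V i)) (f : (∀ i, V i) → ℝ)
    (hf : StronglyTreeSubmodular T f) (m : ℕ) (x : ℕ → ∀ i, V i)
    (hinit : ∀ y ∈ inward T (x 0), f (x 0) ≤ f y)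
    (hstep : ∀ t < m, x (t + 1) ∈ outward T (x t) ∧
      (∀ y ∈ outward T (x t), f (x (t + 1)) ≤ f y) ∧ f (x (t + 1)) < f (x t)) :
    m ≤ Finset.univ.sup fun i => Fintype.card (V i) := by
  classical
  -- each iterate lies outward of `x 0`, within distance `t`
  have anc0 : ∀ t, t ≤ m → ∀ i,
      (T i).anc (x 0 i) (x t i) ∧ (T i).dist (x 0 i) (x t i) ≤ t := by
    intro t
    induction t with
    | zero =>
      intro _ i
      exact ⟨(T i).anc_refl _, by rw [(T i).dist_self]⟩
    | succ t ih =>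
      intro ht i
      obtain ⟨h1, h2⟩ := ih (by omega) i
      obtain ⟨hout, -, -⟩ := hstep t (by omega)
      have ha := hout.2 i
      have hd := hout.1 i
      refine ⟨(T i).anc_trans h1 ha, ?_⟩
      rw [(T i).dist_of_anc h1] at h2
      rw [(T i).dist_of_anc ha] at hd
      rw [(T i).dist_of_anc ((T i).anc_trans h1 ha)]
      have d1 := (T i).depth_le_of_anc h1
      have d2 := (T i).depth_le_of_anc ha
      omega
  -- main invariant: `x t` minimizes `f` over `INWARD(x t)` and over the outward ball
  -- of radius `t` around `x 0`
  have main : ∀ t, t ≤ m →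
      (∀ y, (∀ i, (T i).dist (x t i) (y i) ≤ 1) → (∀ i, (T i).anc (y i) (x t i)) →
        f (x t) ≤ f y) ∧
      (∀ y, (∀ i, (T i).anc (x 0 i) (y i)) → (∀ i, (T i).dist (x 0 i) (y i) ≤ t) →
        f (x t) ≤ f y) := by
    intro t
    induction t with
    | zero =>
      intro _
      refine ⟨fun y h1 h2 => hinit y ⟨h1, h2⟩, fun y h1 h2 => ?_⟩
      have hy : y = x 0 :=
        funext fun i => ((T i).eq_of_dist_eq_zero (Nat.le_zero.mp (h2 i))).symm
      rw [hy]
    | succ t ih =>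
      intro ht
      obtain ⟨I1, B⟩ := ih (by omega)
      obtain ⟨hmem, hmin, hlt⟩ := hstep t (by omega)
      -- neighbor lemma: `x (t+1)` beats every labeling within distance 1 of `x t`
      have NL : ∀ y, (∀ i, (T i).dist (x t i) (y i) ≤ 1) → f (x (t + 1)) ≤ f y := by
        intro y hy
        have hsub := hf (x t) y
        set z1 := fun i => (T i).cap (x t i) (y i) with hz1
        set z2 := fun i => (T i).cup (x t i) (y i) with hz2
        have hz1m : f (x t) ≤ f z1 := by
          refine I1 z1 (fun i => ?_) (fun i => ?_)
          · rcases (T i).cap_cup_of_dist_le_one (hy i) with ⟨e1, _, _⟩ | ⟨e1, _, _⟩ <;>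
              simp only [hz1] <;> rw [e1]
            · rw [(T i).dist_self]; omega
            · exact hy i
          · rcases (T i).cap_cup_of_dist_le_one (hy i) with ⟨e1, _, _⟩ | ⟨e1, _, hba⟩ <;>
              simp only [hz1] <;> rw [e1]
            · exact (T i).anc_refl _
            · exact hba
        have hz2m : f (x (t + 1)) ≤ f z2 := by
          refine hmin z2 ⟨fun i => ?_, fun i => ?_⟩
          · rcases (T i).cap_cup_of_dist_le_one (hy i) with ⟨_, e2, _⟩ | ⟨_, e2, _⟩ <;>
              simp only [hz2] <;> rw [e2]
            · exact hy i
            · rw [(T i).dist_self]; omega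
          · rcases (T i).cap_cup_of_dist_le_one (hy i) with ⟨_, e2, hab⟩ | ⟨_, e2, _⟩ <;>
              simp only [hz2] <;> rw [e2]
            · exact hab
            · exact (T i).anc_refl _
        linarith
      -- ball lemma by induction on the radius around `x t`
      have B' : ∀ D : ℕ, ∀ y, (∀ i, (T i).dist (x t i) (y i) ≤ D) →
          (∀ i, (T i).anc (x 0 i) (y i)) → (∀ i, (T i).dist (x 0 i) (y i) ≤ t + 1) →
          f (x (t + 1)) ≤ f y := by
        intro D
        induction D with
        | zero =>
          intro y h1 _ _
          exact NL y fun i => le_trans (h1 i) (by omega)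
        | succ D ihD =>
          intro y h1 h2 h3
          by_cases hD : D = 0
          · subst hD
            exact NL y h1
          · have hxanc : ∀ i, (T i).anc (x 0 i) (x t i) := fun i => (anc0 t (by omega) i).1
            have hxd : ∀ i, (T i).dist (x 0 i) (x t i) ≤ t := fun i => (anc0 t (by omega) i).2
            have hsub := hf (x t) y
            set z1 := fun i => (T i).cap (x t i) (y i) with hz1
            set z2 := fun i => (T i).cup (x t i) (y i) with hz2
            have hz1m : f (x t) ≤ f z1 := by
              refine B z1 (fun i => ?_) (fun i => ?_)
              · exact ((T i).anc_capcup_of_anc (hxanc i) (h2 i)).1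
              · exact (T i).dist_cap_le (hxanc i) (h2 i) (hxd i) (h3 i)
            have hz2m : f (x (t + 1)) ≤ f z2 := by
              refine ihD z2 (fun i => ?_) (fun i => ?_) (fun i => ?_)
              · have := ((T i).dist_cap_cup_le (x t i) (y i)).2
                have := h1 i
                simp only [hz2]
                omega
              · exact ((T i).anc_capcup_of_anc (hxanc i) (h2 i)).2
              · refine le_trans ((T i).dist_cup_le (hxanc i) (h2 i)) (max_le ?_ (h3 i))
                exact le_trans (hxd i) (by omega)
            linarith
      refine ⟨fun y h1 h2 => NL y fun i => ?_, fun y h1 h2 => ?_⟩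
      · -- INWARD(x (t+1)) ⊆ NEIB(x t)
        have ha1 := hmem.2 i
        have hd1 := hmem.1 i
        rw [(T i).dist_of_anc ha1] at hd1
        have hd2 := h1 i
        rw [(T i).dist_of_anc' (h2 i)] at hd2
        have e1 := (T i).depth_le_of_anc ha1
        have e2 := (T i).depth_le_of_anc (h2 i)
        exact (T i).dist_le_one_of ha1 (h2 i) (by omega) (by omega)
      · -- outward ball of radius t+1 around x 0
        refine B' (2 * t + 2) y (fun i => ?_) h1 h2
        have := (T i).dist_triangle_of_anc (c := x 0 i) (anc0 t (by omega) i).1 (h1 i)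
        have h2' := h2 i
        have hx' := (anc0 t (by omega) i).2
        have hcomm := (T i).dist_comm (x 0 i) (x t i)
        omega
  -- conclusion
  by_contra hm
  push_neg at hm
  rcases isEmpty_or_nonempty ι with hι | hι
  · have h1 : (1 : ℕ) ≤ m := by omega
    have hx01 : x 1 = x 0 := funext fun i => (IsEmpty.false i).elim
    have := (hstep 0 (by omega)).2.2
    rw [hx01] at this
    exact lt_irrefl _ this
  · set K := Finset.univ.sup fun i => Fintype.card (V i) with hK
    have hK1 : 1 ≤ K := by
      obtain ⟨i⟩ := hι
      have h1 : 1 ≤ Fintype.card (V i) := Fintype.card_pos_iff.mpr ⟨(T i).root⟩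
      rw [hK]
      exact le_trans h1 (Finset.le_sup (f := fun i => Fintype.card (V i)) (Finset.mem_univ i))
    have hdistK : ∀ i, (T i).dist (x 0 i) (x K i) ≤ K - 1 := by
      intro i
      have ha := (anc0 K (by omega) i).1
      rw [(T i).dist_of_anc ha]
      have hdep := (T i).depth_lt_card (x K i)
      have hcard : Fintype.card (V i) ≤ K := by
        rw [hK]; exact Finset.le_sup (f := fun i => Fintype.card (V i)) (Finset.mem_univ i)
      omega
    have hB := (main (K - 1) (by omega)).2 (x K)
      (fun i => (anc0 K (by omega) i).1) hdistK
    have hlt := (hstep (K - 1) (by omega)).2.2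
    rw [show K - 1 + 1 = K by omega] at hlt
    linarith
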